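/- arXiv:math/0612305 — 2 statements merged into one kernel-verified Lean document; each statement's English description precedes it below -/
import Mathlib

section
/- Let K be a nontrivially normed field which is locally compact and whose norm is ultrametric (a non-archimedean local field). Let N be an ultrametric norm on Kⁿ. Then there exists a K-basis (e_i) of Kⁿ and positive real numbers α_i > 0 (i ∈ Fin n) such that, writing every x ∈ Kⁿ as x = ∑ i, c i • e i, one has N(x) = max_i (α i · ‖c i‖); that is, every ultrametric norm on Kⁿ is diagonal in some basis. -/
/-!
A family `e` is orthogonal for `N` if `N (∑ cᵢ • eᵢ) = maxᵢ ‖cᵢ‖ * N eᵢ`; we build an orthogonal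
basis one vector at a time. If `e` spans `W ≠ V` and `x ∉ W`, the function
`c ↦ N (x - ∑ cᵢ • eᵢ)` is continuous and exceeds `N x` outside a compact box of coefficients
(here local compactness of `K` enters), so it attains its minimum at a best approximation
`v ∈ W`. By the ultrametric inequality, minimality of `w = x - v` in `w + W` forces
`N (u + d • w) = max (N u) (‖d‖ * N w)` for `u ∈ W`, so `e` extended by `w` is still orthogonal.
Orthogonal families of nonzero vectors are linearly independent, so after `n` steps we have a basis.
-/

open Module Submodule

structure IsUltrametricNorm (K : Type*) {V : Type*} [NormedField K] [AddCommGroup V]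
    [Module K V] (N : V → ℝ) : Prop where
  eq_zero_iff : ∀ x, N x = 0 ↔ x = 0
  map_smul : ∀ (c : K) x, N (c • x) = ‖c‖ * N x
  map_add_le_max : ∀ x y, N (x + y) ≤ max (N x) (N y)

def IsOrthogonalFor (K : Type*) {V ι : Type*} [NormedField K] [AddCommGroup V] [Module K V]
    [Fintype ι] (N : V → ℝ) (e : ι → V) : Prop :=
  ∀ c : ι → K, N (∑ i, c i • e i) = ⨆ i, ‖c i‖ * N (e i)

theorem Real.iSup_fin_succ_of_nonneg {k : ℕ} {f : Fin (k + 1) → ℝ} (hf : ∀ i, 0 ≤ f i) :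
    ⨆ i, f i = max (⨆ i : Fin k, f i.castSucc) (f (Fin.last k)) := by
  apply le_antisymm
  · refine Real.iSup_le (fun i => ?_) ((hf _).trans (le_max_right _ _))
    refine Fin.lastCases (le_max_right _ _) (fun j => ?_) i
    exact (le_ciSup (Finite.bddAbove_range (fun j : Fin k => f j.castSucc)) j).trans
      (le_max_left _ _)
  · exact max_le (Real.iSup_le (fun j => le_ciSup (Finite.bddAbove_range f) j.castSucc)
      (Real.iSup_nonneg hf)) (le_ciSup (Finite.bddAbove_range f) (Fin.last k))

section

variable {K V : Type*} [NormedField K] [AddCommGroup V] [Module K V] {N : V → ℝ}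

namespace IsUltrametricNorm

variable (hN : IsUltrametricNorm K N)
include hN

theorem map_zero : N 0 = 0 := (hN.eq_zero_iff 0).2 rfl

theorem map_neg (x : V) : N (-x) = N x := by
  simpa using hN.map_smul (-1) x

theorem map_sub_le_max (x y : V) : N (x - y) ≤ max (N x) (N y) := by
  simpa [sub_eq_add_neg, hN.map_neg] using hN.map_add_le_max x (-y)

theorem nonneg (x : V) : 0 ≤ N x := by
  simpa [hN.map_zero] using hN.map_sub_le_max x x

theorem pos_of_ne_zero {x : V} (hx : x ≠ 0) : 0 < N x :=
  (hN.nonneg x).lt_of_ne fun h => hx ((hN.eq_zero_iff x).1 h.symm)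

theorem le_map_sub_of_lt {x y : V} (h : N x < N y) : N y ≤ N (x - y) := by
  have := hN.map_sub_le_max x (x - y)
  rw [sub_sub_cancel] at this
  exact (le_max_iff.1 this).resolve_left h.not_ge

theorem map_add_le_add (x y : V) : N (x + y) ≤ N x + N y :=
  (hN.map_add_le_max x y).trans (max_le_add_of_nonneg (hN.nonneg x) (hN.nonneg y))

theorem abs_sub_le (x y : V) : |N x - N y| ≤ N (x - y) := by
  refine abs_sub_le_iff.2 ⟨?_, ?_⟩
  · simpa using hN.map_add_le_add (x - y) y
  · have := hN.map_add_le_add (-(x - y)) x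
    rw [hN.map_neg, neg_sub, sub_add_cancel] at this
    linarith

theorem map_add_smul_of_forall_le {W : Submodule K V} {w : V} (hw : ∀ v ∈ W, N w ≤ N (w + v))
    {v : V} (hv : v ∈ W) (d : K) : N (v + d • w) = max (N v) (‖d‖ * N w) := by
  have hdw : ‖d‖ * N w ≤ N (v + d • w) := by
    rcases eq_or_ne d 0 with rfl | hd
    · simpa using hN.nonneg v
    · calc ‖d‖ * N w ≤ ‖d‖ * N (w + d⁻¹ • v) :=
            mul_le_mul_of_nonneg_left (hw _ (W.smul_mem _ hv)) (norm_nonneg d)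
        _ = N (v + d • w) := by
            rw [← hN.map_smul, smul_add, smul_inv_smul₀ hd, add_comm]
  refine le_antisymm ?_ (max_le ?_ hdw)
  · simpa [hN.map_smul] using hN.map_add_le_max v (d • w)
  · have := hN.map_sub_le_max (v + d • w) (d • w)
    rw [add_sub_cancel_right, hN.map_smul] at this
    exact this.trans (max_le le_rfl hdw)

end IsUltrametricNorm

namespace IsOrthogonalFor

variable {ι : Type*} [Fintype ι] {e : ι → V}

theorem of_isEmpty [IsEmpty ι] (hN : IsUltrametricNorm K N) : IsOrthogonalFor K N e := by
  intro c
  simp [hN.map_zero]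

variable (hN : IsUltrametricNorm K N) (he : IsOrthogonalFor K N e)
include hN he

theorem linearIndependent (he0 : ∀ i, e i ≠ 0) : LinearIndependent K e := by
  refine Fintype.linearIndependent_iff.2 fun c hc i => ?_
  have hle : ‖c i‖ * N (e i) ≤ 0 := by
    rw [← hN.map_zero, ← hc, he c]
    exact le_ciSup (Finite.bddAbove_range fun j => ‖c j‖ * N (e j)) i
  have := hN.pos_of_ne_zero (he0 i)
  exact norm_le_zero_iff.1 (nonpos_of_mul_nonpos_left hle this)

theorem continuous_sub_sum (x : V) : Continuous fun c : ι → K => N (x - ∑ i, c i • e i) := by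
  have hC : 0 ≤ ∑ i, N (e i) := Finset.sum_nonneg fun i _ => hN.nonneg _
  refine (LipschitzWith.of_dist_le_mul (K := ⟨_, hC⟩) fun c c' => ?_).continuous
  calc dist (N (x - ∑ i, c i • e i)) (N (x - ∑ i, c' i • e i))
      ≤ N (∑ i, (c' - c) i • e i) := by
        rw [Real.dist_eq]
        convert hN.abs_sub_le _ _ using 2
        simp [sub_smul, Finset.sum_sub_distrib]
    _ = ⨆ i, ‖(c' - c) i‖ * N (e i) := he _
    _ ≤ (∑ i, N (e i)) * dist c c' := by
        refine Real.iSup_le (fun i => ?_) (by positivity)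
        rw [dist_comm, dist_eq_norm, mul_comm]
        exact mul_le_mul (Finset.single_le_sum (fun j _ => hN.nonneg (e j)) (Finset.mem_univ i))
          (norm_le_pi_norm _ i) (norm_nonneg _) hC

theorem exists_forall_le_sub [ProperSpace K] (he0 : ∀ i, e i ≠ 0) (x : V) :
    ∃ v ∈ span K (Set.range e), ∀ u ∈ span K (Set.range e), N (x - v) ≤ N (x - u) := by
  set f : (ι → K) → ℝ := fun c => N (x - ∑ i, c i • e i)
  have hpos i := hN.pos_of_ne_zero (he0 i)
  set S : Set (ι → K) := Set.univ.pi fun i => Metric.closedBall 0 (N x / N (e i))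
  have h0S : (0 : ι → K) ∈ S := fun i _ =>
    Metric.mem_closedBall_self (div_nonneg (hN.nonneg x) (hpos i).le)
  obtain ⟨c₀, -, hc₀⟩ := (isCompact_univ_pi fun i => isCompact_closedBall _ _).exists_isMinOn
    ⟨0, h0S⟩ (he.continuous_sub_sum hN x).continuousOn
  have hfc₀ : f c₀ ≤ N x := by simpa [f] using hc₀ h0S
  have hmin c : f c₀ ≤ f c := by
    by_cases hc : c ∈ S
    · exact hc₀ hc
    simp only [S, Set.mem_univ_pi, not_forall] at hc
    obtain ⟨i, hi⟩ := hc
    rw [Metric.mem_closedBall, dist_zero_right, not_le, div_lt_iff₀ (hpos i)] at hi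
    have hlt : N x < N (∑ i, c i • e i) :=
      hi.trans_le ((he c).symm ▸ le_ciSup (Finite.bddAbove_range fun j => ‖c j‖ * N (e j)) i)
    exact hfc₀.trans (hlt.le.trans (hN.le_map_sub_of_lt hlt))
  refine ⟨∑ i, c₀ i • e i, mem_span_range_iff_exists_fun K |>.2 ⟨c₀, rfl⟩, fun u hu => ?_⟩
  obtain ⟨c, rfl⟩ := mem_span_range_iff_exists_fun K |>.1 hu
  exact hmin c

omit he in
theorem snoc {k : ℕ} {e : Fin k → V} (he : IsOrthogonalFor K N e) {w : V}
    (hw : ∀ v ∈ span K (Set.range e), N w ≤ N (w + v)) :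
    IsOrthogonalFor K N (Fin.snoc e w : Fin (k + 1) → V) := by
  intro c
  have hv : ∑ i : Fin k, c i.castSucc • e i ∈ span K (Set.range e) :=
    mem_span_range_iff_exists_fun K |>.2 ⟨_, rfl⟩
  rw [Fin.sum_univ_castSucc,
    Real.iSup_fin_succ_of_nonneg fun i => mul_nonneg (norm_nonneg _) (hN.nonneg _)]
  simp only [Fin.snoc_castSucc, Fin.snoc_last]
  rw [hN.map_add_smul_of_forall_le hw hv, he]

end IsOrthogonalFor

namespace IsUltrametricNorm

variable [ProperSpace K] (hN : IsUltrametricNorm K N)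
include hN

theorem exists_isOrthogonalFor_of_le_finrank {k : ℕ} (hk : k ≤ finrank K V) :
    ∃ e : Fin k → V, IsOrthogonalFor K N e ∧ ∀ i, e i ≠ 0 := by
  induction k with
  | zero => exact ⟨Fin.elim0, .of_isEmpty hN, fun i => i.elim0⟩
  | succ k ih =>
    obtain ⟨e, he, he0⟩ := ih (Nat.le_of_succ_le hk)
    obtain ⟨x, hx⟩ : ∃ x, x ∉ span K (Set.range e) := by
      by_contra! h
      have := finrank_range_le_card (R := K) e
      have htop : span K (Set.range e) = ⊤ := eq_top_iff.2 fun x _ => h x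
      rw [Set.finrank, htop, finrank_top, Fintype.card_fin] at this
      omega
    obtain ⟨v, hv, hmin⟩ := he.exists_forall_le_sub hN he0 x
    have hw : ∀ u ∈ span K (Set.range e), N (x - v) ≤ N (x - v + u) := fun u hu => by
      simpa [sub_add] using hmin (v - u) (sub_mem hv hu)
    refine ⟨Fin.snoc e (x - v), he.snoc hN hw, Fin.lastCases ?_ fun i => ?_⟩
    · simpa [sub_eq_zero] using fun h : x = v => hx (h ▸ hv)
    · simpa using he0 i

theorem exists_basis_isOrthogonalFor [FiniteDimensional K V] {n : ℕ} (hn : finrank K V = n) :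
    ∃ b : Basis (Fin n) K V, IsOrthogonalFor K N b := by
  obtain ⟨e, he, he0⟩ := hN.exists_isOrthogonalFor_of_le_finrank hn.ge
  refine ⟨basisOfLinearIndependentOfCardEqFinrank' e (he.linearIndependent hN he0) ?_, ?_⟩
  · simp [hn]
  · simpa using he

end IsUltrametricNorm

end

theorem stmt6_general (K : Type*) [NontriviallyNormedField K] [LocallyCompactSpace K]
    (n : ℕ) (N : (Fin n → K) → ℝ)
    (hN0 : ∀ x, N x = 0 ↔ x = 0)
    (hNsmul : ∀ (c : K) (x), N (c • x) = ‖c‖ * N x)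
    (hNadd : ∀ x y, N (x + y) ≤ max (N x) (N y)) :
    ∃ (e : Module.Basis (Fin n) K (Fin n → K)) (α : Fin n → ℝ),
      (∀ i, 0 < α i) ∧
      (∀ c : Fin n → K, N (∑ i, c i • e i) = ⨆ i, α i * ‖c i‖) := by
  have hN : IsUltrametricNorm K N := ⟨hN0, hNsmul, hNadd⟩
  have : ProperSpace K := .of_locallyCompactSpace K
  obtain ⟨b, hb⟩ := hN.exists_basis_isOrthogonalFor (finrank_fin_fun K)
  refine ⟨b, fun i => N (b i), fun i => hN.pos_of_ne_zero (b.ne_zero i), fun c => ?_⟩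
  simp only [hb c, mul_comm]

/-- Over a non-archimedean local field `K`, every ultrametric norm on `Kⁿ` is diagonal in
some basis: `N(∑ cᵢ eᵢ) = max_i (αᵢ * ‖cᵢ‖)` for some `αᵢ > 0`. -/
theorem stmt6 (K : Type*) [NontriviallyNormedField K] [LocallyCompactSpace K]
    (hu : ∀ x y : K, ‖x + y‖ ≤ max ‖x‖ ‖y‖)
    (n : ℕ) (N : (Fin n → K) → ℝ)
    (hN0 : ∀ x, N x = 0 ↔ x = 0)
    (hNsmul : ∀ (c : K) (x), N (c • x) = ‖c‖ * N x)
    (hNadd : ∀ x y, N (x + y) ≤ max (N x) (N y)) :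
    ∃ (e : Module.Basis (Fin n) K (Fin n → K)) (α : Fin n → ℝ),
      (∀ i, 0 < α i) ∧
      (∀ c : Fin n → K, N (∑ i, c i • e i) = ⨆ i, α i * ‖c i‖) :=
  stmt6_general K n N hN0 hNsmul hNadd
end

section
/- Let p be a prime. For every invertible n×n matrix g over ℚ_p there exist invertible matrices k₁, k₂ over ℚ_p, all of whose entries and all of whose inverses' entries have norm at most 1 (i.e., k₁, k₂ ∈ GLₙ(ℤ_p)), and a monotone nondecreasing function a : Fin n → ℤ, such that g = k₁ · D · k₂, where D is the diagonal matrix with diagonal entries D_{ii} = p^{a i}. -/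
/-!
Induction on `n`. Permuting rows and columns moves an entry of maximal norm to the
bottom-right corner. Dividing by it makes every other entry of its row and column integral,
so the transvections of Gaussian elimination that clear that row and column lie in
`GLₙ(ℤ_p)`, and what remains is block diagonal. The corner entry is `u * p ^ v` with
`‖u‖ = 1`, and the other block is handled by induction. Finally, conjugating the diagonal
by a permutation matrix sorts the exponents.
-/

open Matrix

section IntegralGL

variable {ι κ μ K : Type*} [NormedField K] [IsUltrametricDist K]

theorem Matrix.norm_mul_apply_le_one [Fintype κ] {A : Matrix ι κ K} {B : Matrix κ μ K}
    (hA : ∀ i j, ‖A i j‖ ≤ 1) (hB : ∀ i j, ‖B i j‖ ≤ 1) (i : ι) (j : μ) :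
    ‖(A * B) i j‖ ≤ 1 :=
  IsUltrametricDist.norm_sum_le_of_forall_le_of_nonneg zero_le_one fun x _ => by
    rw [norm_mul]
    exact mul_le_one₀ (hA i x) (norm_nonneg _) (hB x j)

variable (ι K) [Fintype ι] [DecidableEq ι]

def Matrix.integralGL : Submonoid (Matrix ι ι K) where
  carrier := {k | IsUnit k.det ∧ (∀ i j, ‖k i j‖ ≤ 1) ∧ ∀ i j, ‖k⁻¹ i j‖ ≤ 1}
  one_mem' := by
    have h : ∀ i j, ‖(1 : Matrix ι ι K) i j‖ ≤ 1 := fun i j => by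
      rw [one_apply]; split_ifs <;> simp
    exact ⟨by simp, h, by simpa using h⟩
  mul_mem' := by
    rintro A B ⟨hA, hA₁, hA₂⟩ ⟨hB, hB₁, hB₂⟩
    refine ⟨by simpa using hA.mul hB, norm_mul_apply_le_one hA₁ hB₁, ?_⟩
    rw [mul_inv_rev]
    exact norm_mul_apply_le_one hB₂ hA₂

variable {ι K}

namespace Matrix

theorem mem_integralGL_of_mul_eq_one {A B : Matrix ι ι K} (h : A * B = 1)
    (hA : ∀ i j, ‖A i j‖ ≤ 1) (hB : ∀ i j, ‖B i j‖ ≤ 1) : A ∈ integralGL ι K :=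
  ⟨isUnit_det_of_right_inverse h, hA, by rwa [inv_eq_right_inv h]⟩

theorem nonsing_inv_mem_integralGL {k : Matrix ι ι K} (hk : k ∈ integralGL ι K) :
    k⁻¹ ∈ integralGL ι K :=
  ⟨isUnit_nonsing_inv_det k hk.1, hk.2.2, by rw [nonsing_inv_nonsing_inv k hk.1]; exact hk.2.1⟩

theorem transvection_mem_integralGL {i j : ι} (hij : i ≠ j) {c : K} (hc : ‖c‖ ≤ 1) :
    transvection i j c ∈ integralGL ι K := by
  have entries : ∀ {c : K}, ‖c‖ ≤ 1 → ∀ a b, ‖transvection i j c a b‖ ≤ 1 := by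
    intro c hc a b
    simp only [transvection, add_apply, one_apply, single_apply]
    split_ifs <;> simp_all
  refine mem_integralGL_of_mul_eq_one (B := transvection i j (-c)) ?_ (entries hc)
    (entries (by rwa [norm_neg]))
  rw [transvection_mul_transvection_same i j hij, add_neg_cancel, transvection_zero]

theorem diagonal_mem_integralGL {u : ι → K} (hu : ∀ i, ‖u i‖ = 1) :
    diagonal u ∈ integralGL ι K := by
  have hu₀ : ∀ i, u i ≠ 0 := fun i h => by simpa [h] using hu i
  refine mem_integralGL_of_mul_eq_one (B := diagonal u⁻¹) ?_ ?_ ?_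
  · simp [diagonal_mul_diagonal, hu₀]
  · intro i j; rw [diagonal_apply]; split_ifs <;> simp [hu]
  · intro i j; rw [diagonal_apply]; split_ifs <;> simp [hu]

variable [Fintype κ] [DecidableEq κ]

theorem submatrix_mem_integralGL {k : Matrix ι ι K} (hk : k ∈ integralGL ι K) (e₁ e₂ : κ ≃ ι) :
    k.submatrix e₁ e₂ ∈ integralGL κ K :=
  mem_integralGL_of_mul_eq_one (B := k⁻¹.submatrix e₂ e₁)
    (by rw [submatrix_mul_equiv, mul_nonsing_inv k hk.1, submatrix_one_equiv])
    (fun _ _ => hk.2.1 _ _) (fun _ _ => hk.2.2 _ _)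

theorem fromBlocks_mem_integralGL {k : Matrix ι ι K} {k' : Matrix κ κ K}
    (hk : k ∈ integralGL ι K) (hk' : k' ∈ integralGL κ K) :
    fromBlocks k 0 0 k' ∈ integralGL (ι ⊕ κ) K := by
  refine mem_integralGL_of_mul_eq_one (B := fromBlocks k⁻¹ 0 0 k'⁻¹) ?_ ?_ ?_
  · simp [fromBlocks_multiply, mul_nonsing_inv _ hk.1, mul_nonsing_inv _ hk'.1]
  · rintro (i | i) (j | j) <;> simp [hk.2.1, hk'.2.1]
  · rintro (i | i) (j | j) <;> simp [hk.2.2, hk'.2.2]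

end Matrix

end IntegralGL

theorem Matrix.submatrix_mul_diagonal_mul {ι κ R : Type*} [Fintype ι] [Fintype κ]
    [DecidableEq ι] [DecidableEq κ] [Semiring R] (A B : Matrix ι ι R) (d : ι → R)
    (e₁ e₂ f : κ ≃ ι) :
    (A * diagonal d * B).submatrix e₁ e₂
      = A.submatrix e₁ f * diagonal (d ∘ f) * B.submatrix f e₂ := by
  rw [← submatrix_diagonal_equiv, submatrix_mul_equiv, submatrix_mul_equiv]

theorem Padic.exists_norm_eq_one_mul_zpow {p : ℕ} [Fact p.Prime] {x : ℚ_[p]} (hx : x ≠ 0) :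
    ∃ (u : ℚ_[p]) (v : ℤ), ‖u‖ = 1 ∧ x = u * (p : ℚ_[p]) ^ v := by
  have hp : (p : ℚ_[p]) ≠ 0 := Nat.cast_ne_zero.mpr (Fact.out : p.Prime).ne_zero
  refine ⟨x * (p : ℚ_[p]) ^ (-x.valuation), x.valuation, ?_, ?_⟩
  · rw [norm_mul, norm_eq_zpow_neg_valuation hx, norm_p_zpow, neg_neg, ← zpow_add₀]
    · simp
    · exact_mod_cast (Fact.out : p.Prime).ne_zero
  · rw [mul_assoc, ← zpow_add₀ hp, neg_add_cancel, zpow_zero, mul_one]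

section Cartan

variable {p : ℕ} [Fact p.Prime] {ι κ : Type*} [Fintype ι] [DecidableEq ι] [Fintype κ]
  [DecidableEq κ]

variable (p) in
def Matrix.HasCartanDecomposition (A : Matrix ι ι ℚ_[p]) : Prop :=
  ∃ k₁ ∈ integralGL ι ℚ_[p], ∃ k₂ ∈ integralGL ι ℚ_[p], ∃ a : ι → ℤ,
    A = k₁ * diagonal (fun i => (p : ℚ_[p]) ^ a i) * k₂

namespace Matrix.HasCartanDecomposition

variable {A : Matrix ι ι ℚ_[p]}

theorem submatrix (h : HasCartanDecomposition p A) (e₁ e₂ : κ ≃ ι) :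
    HasCartanDecomposition p (A.submatrix e₁ e₂) := by
  obtain ⟨k₁, hk₁, k₂, hk₂, a, rfl⟩ := h
  exact ⟨_, submatrix_mem_integralGL hk₁ e₁ e₁, _, submatrix_mem_integralGL hk₂ e₁ e₂, a ∘ e₁,
    submatrix_mul_diagonal_mul _ _ _ e₁ e₂ e₁⟩

theorem of_submatrix (e₁ e₂ : κ ≃ ι) (h : HasCartanDecomposition p (A.submatrix e₁ e₂)) :
    HasCartanDecomposition p A := by
  simpa using h.submatrix e₁.symm e₂.symm

theorem mul_mul (h : HasCartanDecomposition p A) {k k' : Matrix ι ι ℚ_[p]}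
    (hk : k ∈ integralGL ι ℚ_[p]) (hk' : k' ∈ integralGL ι ℚ_[p]) :
    HasCartanDecomposition p (k * A * k') := by
  obtain ⟨k₁, hk₁, k₂, hk₂, a, rfl⟩ := h
  exact ⟨k * k₁, mul_mem hk hk₁, k₂ * k', mul_mem hk₂ hk', a, by simp only [Matrix.mul_assoc]⟩

theorem fromBlocks {B : Matrix κ κ ℚ_[p]} (hA : HasCartanDecomposition p A)
    (hB : HasCartanDecomposition p B) : HasCartanDecomposition p (fromBlocks A 0 0 B) := by
  obtain ⟨k₁, hk₁, k₂, hk₂, a, rfl⟩ := hA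
  obtain ⟨k₁', hk₁', k₂', hk₂', b, rfl⟩ := hB
  refine ⟨_, fromBlocks_mem_integralGL hk₁ hk₁', _, fromBlocks_mem_integralGL hk₂ hk₂',
    Sum.elim a b, ?_⟩
  have hd : (fun i => (p : ℚ_[p]) ^ Sum.elim a b i)
      = Sum.elim (fun i => (p : ℚ_[p]) ^ a i) (fun i => (p : ℚ_[p]) ^ b i) := by
    ext (i | i) <;> rfl
  rw [hd, ← fromBlocks_diagonal, fromBlocks_multiply, fromBlocks_multiply]
  simp

end Matrix.HasCartanDecomposition

namespace Matrix

theorem hasCartanDecomposition_diagonal {d : ι → ℚ_[p]} (hd : ∀ i, d i ≠ 0) :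
    HasCartanDecomposition p (diagonal d) := by
  choose u v hu hd using fun i => Padic.exists_norm_eq_one_mul_zpow (hd i)
  refine ⟨diagonal u, diagonal_mem_integralGL hu, 1, one_mem _, v, ?_⟩
  rw [mul_one, diagonal_mul_diagonal]
  exact congrArg diagonal (funext hd)

theorem hasCartanDecomposition_of_unique [Unique ι] {A : Matrix ι ι ℚ_[p]}
    (hA : IsUnit A.det) : HasCartanDecomposition p A := by
  have hA' : A = diagonal fun i => A i i := by
    ext i j
    rw [Subsingleton.elim j i, diagonal_apply_eq]
  rw [hA'] at hA ⊢
  refine hasCartanDecomposition_diagonal fun i => ?_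
  simpa [Subsingleton.elim i default] using hA.ne_zero

open Pivot in
theorem hasCartanDecomposition_of_pivot {r : ℕ}
    {M : Matrix (Fin r ⊕ Unit) (Fin r ⊕ Unit) ℚ_[p]} (hM : IsUnit M.det)
    (hmax : ∀ i j, ‖M i j‖ ≤ ‖M (.inr ()) (.inr ())‖)
    (ih : ∀ N : Matrix (Fin r) (Fin r) ℚ_[p], IsUnit N.det → HasCartanDecomposition p N) :
    HasCartanDecomposition p M := by
  have hpivot : M (.inr ()) (.inr ()) ≠ 0 := by
    intro h0
    have : M = 0 := by ext i j; simpa [h0] using hmax i j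
    simp [this] at hM
  have htransvection : ∀ {i j : Fin r ⊕ Unit} (hij : i ≠ j) (x y),
      transvection i j (-M x y / M (.inr ()) (.inr ())) ∈ integralGL _ ℚ_[p] :=
    fun hij x y => transvection_mem_integralGL hij <| by
      rw [norm_div, norm_neg, div_le_one (norm_pos_iff.2 hpivot)]
      exact hmax x y
  have hL : (listTransvecCol M).prod ∈ integralGL _ ℚ_[p] :=
    Submonoid.list_prod_mem _ fun t ht => by
      obtain ⟨i, rfl⟩ := List.mem_ofFn.mp ht
      exact htransvection (by simp) _ _
  have hL' : (listTransvecRow M).prod ∈ integralGL _ ℚ_[p] :=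
    Submonoid.list_prod_mem _ fun t ht => by
      obtain ⟨i, rfl⟩ := List.mem_ofFn.mp ht
      exact htransvection (by simp) _ _
  set N := (listTransvecCol M).prod * M * (listTransvecRow M).prod with hN_def
  have hN : N = fromBlocks N.toBlocks₁₁ 0 0 N.toBlocks₂₂ := by
    obtain ⟨h₁₂, h₂₁⟩ := isTwoBlockDiagonal_listTransvecCol_mul_mul_listTransvecRow M hpivot
    rw [← h₁₂, ← h₂₁, fromBlocks_toBlocks]
  have hN_det : IsUnit N.det := by
    rw [hN_def, det_mul, det_mul]
    exact (hL.1.mul hM).mul hL'.1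
  rw [hN, det_fromBlocks_zero₂₁, IsUnit.mul_iff] at hN_det
  have hN_cartan : HasCartanDecomposition p N := by
    rw [hN]
    exact (ih _ hN_det.1).fromBlocks (hasCartanDecomposition_of_unique hN_det.2)
  have hMN : M = (listTransvecCol M).prod⁻¹ * N * (listTransvecRow M).prod⁻¹ := by
    rw [hN_def, ← Matrix.mul_assoc, ← Matrix.mul_assoc, nonsing_inv_mul _ hL.1, Matrix.one_mul,
      Matrix.mul_assoc, mul_nonsing_inv _ hL'.1, Matrix.mul_one]
  rw [hMN]
  exact hN_cartan.mul_mul (nonsing_inv_mem_integralGL hL) (nonsing_inv_mem_integralGL hL')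

theorem hasCartanDecomposition_fin :
    ∀ {r : ℕ} {A : Matrix (Fin r) (Fin r) ℚ_[p]}, IsUnit A.det → HasCartanDecomposition p A
  | 0, _, _ => ⟨1, one_mem _, 1, one_mem _, 0, Subsingleton.elim _ _⟩
  | r + 1, A, hA => by
    obtain ⟨⟨i₀, j₀⟩, hmax⟩ :=
      Finite.exists_max fun ij : Fin (r + 1) × Fin (r + 1) => ‖A ij.1 ij.2‖
    have pivot_equiv : ∀ i, ∃ e : Fin r ⊕ Unit ≃ Fin (r + 1), e (.inr ()) = i := fun i => by
      let e : Fin r ⊕ Unit ≃ Fin (r + 1) := Fintype.equivOfCardEq (by simp)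
      exact ⟨e.trans (Equiv.swap (e (.inr ())) i), by simp⟩
    obtain ⟨e₁, he₁⟩ := pivot_equiv i₀
    obtain ⟨e₂, he₂⟩ := pivot_equiv j₀
    refine HasCartanDecomposition.of_submatrix e₁ e₂ <| hasCartanDecomposition_of_pivot ?_ ?_
      fun N hN => hasCartanDecomposition_fin hN
    · exact isUnit_det_of_right_inverse (B := A⁻¹.submatrix e₂ e₁)
        (by rw [submatrix_mul_equiv, mul_nonsing_inv _ hA, submatrix_one_equiv])
    · intro i j
      simpa [he₁, he₂] using hmax (e₁ i, e₂ j)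

end Matrix

end Cartan

/-- Cartan decomposition for `GL(n, ℚ_p)`: every invertible matrix `g` over `ℚ_p` can be
written as `g = k₁ * D * k₂` where `k₁, k₂ ∈ GLₙ(ℤ_p)` (all entries of `kᵢ` and `kᵢ⁻¹` have
norm at most 1) and `D` is diagonal with entries `p^(a i)` for a monotone `a : Fin n → ℤ`. -/
theorem stmt7 (p : ℕ) [Fact p.Prime] (n : ℕ)
    (g : Matrix (Fin n) (Fin n) ℚ_[p]) (hg : IsUnit g.det) :
    ∃ (k₁ k₂ : Matrix (Fin n) (Fin n) ℚ_[p]) (a : Fin n → ℤ),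
      IsUnit k₁.det ∧ (∀ i j, ‖k₁ i j‖ ≤ 1) ∧ (∀ i j, ‖k₁⁻¹ i j‖ ≤ 1) ∧
      IsUnit k₂.det ∧ (∀ i j, ‖k₂ i j‖ ≤ 1) ∧ (∀ i j, ‖k₂⁻¹ i j‖ ≤ 1) ∧
      Monotone a ∧
      g = k₁ * Matrix.diagonal (fun i => (p : ℚ_[p]) ^ (a i)) * k₂ := by
  obtain ⟨k₁, hk₁, k₂, hk₂, a, rfl⟩ := hasCartanDecomposition_fin hg
  let σ := Tuple.sort a
  obtain ⟨hk₁_det, hk₁, hk₁_inv⟩ := submatrix_mem_integralGL hk₁ (.refl _) σ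
  obtain ⟨hk₂_det, hk₂, hk₂_inv⟩ := submatrix_mem_integralGL hk₂ σ (.refl _)
  refine ⟨_, _, a ∘ σ, hk₁_det, hk₁, hk₁_inv, hk₂_det, hk₂, hk₂_inv, Tuple.monotone_sort a, ?_⟩
  exact (submatrix_id_id _).symm.trans
    (submatrix_mul_diagonal_mul k₁ k₂ _ (.refl _) (.refl _) σ)
end
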